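/- arXiv:1607.06569 — 2 statements merged into one kernel-verified Lean document; each statement's English description precedes it below -/
import Mathlib

section
/- Let H be a real Hilbert space, f : H → ℝ ∪ {+∞} a proper lower semicontinuous function, x̄ ∈ dom f with 0 ∈ ∂_p f(x̄). Suppose qri(N_M(gph ∂_p f, (x̄, 0))) ≠ ∅ and qri(dom ∂²_M f(x̄, 0)) ⊆ −sqri(dom D²_M f(x̄, 0)), where dom ∂²_M f(x̄, 0) := {h : ∂²_M f(x̄, 0)(h) ≠ ∅} and dom D²_M f(x̄, 0) := {h : D²_M f(x̄, 0)(h) ≠ ∅}. If f satisfies the second-order optimality condition of the second kind at x̄, then f satisfies the second-order optimality condition of the third kind at x̄. -/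
open Filter Topology Set Pointwise

noncomputable section

variable {H : Type*} [NormedAddCommGroup H] [InnerProductSpace ℝ H] [CompleteSpace H]

/-- The proximal subdifferential of `f` at `x`. -/
def proxSubdiff (f : H → EReal) (x : H) : Set H :=
  {ζ | ∃ σ > (0:ℝ), ∃ δ > (0:ℝ), ∀ y ∈ Metric.ball x δ,
    f x + (((inner ℝ ζ (y - x) : ℝ) - σ / 2 * ‖y - x‖ ^ 2 : ℝ) : EReal) ≤ f y}

/-- The second-order difference quotient `Δ₂f(x₀,p,t,u)`. -/
def Delta2 (f : H → EReal) (x₀ p : H) (t : ℝ) (u : H) : EReal :=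
  ((2 / t ^ 2 : ℝ) : EReal) * (f (x₀ + t • u) - f x₀ - ((t * (inner ℝ p u : ℝ) : ℝ) : EReal))

/-- The second-order lower Dini-directional derivative `f''₋(x₀,p,h)`. -/
def secondDini (f : H → EReal) (x₀ p h : H) : EReal :=
  Filter.liminf (fun q : ℝ × H => Delta2 f x₀ p q.1 q.2)
    ((nhdsWithin (0:ℝ) (Set.Ioi 0)) ×ˢ (nhds h))

/-- Weak sequential convergence in a Hilbert space. -/
def WeakTendsto (u : ℕ → H) (x : H) : Prop :=
  ∀ w : H, Tendsto (fun n => (inner ℝ (u n) w : ℝ)) atTop (nhds (inner ℝ x w : ℝ))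

/-- The mixed contingent cone `T_M(gph ∂_p f, (x₀,p))`. -/
def mixedTangent (f : H → EReal) (x₀ p : H) : Set (H × H) :=
  {q | ∃ (t : ℕ → ℝ) (hn zn : ℕ → H),
    (∀ n, 0 < t n) ∧ Tendsto t atTop (nhds 0) ∧
    Tendsto hn atTop (nhds q.1) ∧ WeakTendsto zn q.2 ∧
    ∀ n, p + t n • zn n ∈ proxSubdiff f (x₀ + t n • hn n)}

/-- The second-order mixed graphical derivative `D²_M f(x₀,p)(h)`. -/
def D2M (f : H → EReal) (x₀ p : H) (h : H) : Set H := {z | (h, z) ∈ mixedTangent f x₀ p}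

/-- Dual cone of a subset of `H × H`. -/
def dualConePair (S : Set (H × H)) : Set (H × H) :=
  {q | ∀ w ∈ S, (inner ℝ q.1 w.1 : ℝ) + (inner ℝ q.2 w.2 : ℝ) ≤ 0}

/-- `N_M(gph ∂_p f, (x₀,p))`, the dual cone of the mixed contingent cone. -/
def NM (f : H → EReal) (x₀ p : H) : Set (H × H) := dualConePair (mixedTangent f x₀ p)

/-- The second-order mixed proximal subdifferential `∂²_M f(x₀,p)(h)`. -/
def partial2M (f : H → EReal) (x₀ p : H) (h : H) : Set H := {z | (z, -h) ∈ NM f x₀ p}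

/-- The limiting (Mordukhovich) subdifferential of `g` at `x`. -/
def limitSubdiff (g : H → EReal) (x : H) : Set H :=
  {ζ | ∃ (xn ζn : ℕ → H), Tendsto xn atTop (nhds x) ∧
    Tendsto (fun n => g (xn n)) atTop (nhds (g x)) ∧
    WeakTendsto ζn ζ ∧ ∀ n, ζn n ∈ proxSubdiff g (xn n)}

/-- Epigraph of an `EReal`-valued function, viewed inside `H × ℝ`. -/
def epiE (g : H → EReal) : Set (H × ℝ) := {q | g q.1 ≤ (q.2 : EReal)}

/-- Weak convergence in `H × ℝ`: weak in `H`, usual in `ℝ`. -/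
def WeakTendstoPair (u : ℕ → H × ℝ) (q : H × ℝ) : Prop :=
  WeakTendsto (fun n => (u n).1) q.1 ∧ Tendsto (fun n => (u n).2) atTop (nhds q.2)

/-- Mosco convergence of a sequence of subsets of `H × ℝ` to `L`. -/
def MoscoConv (C : ℕ → Set (H × ℝ)) (L : Set (H × ℝ)) : Prop :=
  (L = {q | ∃ u : ℕ → H × ℝ, (∀ n, u n ∈ C n) ∧ Tendsto u atTop (nhds q)}) ∧
  (L = {q | ∃ (u : ℕ → H × ℝ) (φ : ℕ → ℕ), StrictMono φ ∧ (∀ n, u n ∈ C n) ∧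
      WeakTendstoPair (fun n => u (φ n)) q})

/-- `f` is twice epi-differentiable at `x₀` relative to `p` in the sense of Mosco. -/
def TwiceEpiDiff (f : H → EReal) (x₀ p : H) : Prop :=
  ∃ g : H → EReal, (∀ x, g x ≠ ⊥) ∧ (∃ x, g x ≠ ⊤) ∧
    ∀ t : ℕ → ℝ, (∀ n, 0 < t n) → Tendsto t atTop (nhds 0) →
      MoscoConv (fun n => epiE (fun u => Delta2 f x₀ p (t n) u)) (epiE g)

/-- Concavity on a set for `EReal`-valued functions. -/
def ConcaveOnE {E : Type*} [AddCommGroup E] [Module ℝ E] (s : Set E) (g : E → EReal) : Prop :=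
  ∀ u ∈ s, ∀ v ∈ s, ∀ μ : ℝ, 0 ≤ μ → μ ≤ 1 →
    ((μ : ℝ) : EReal) * g u + ((1 - μ : ℝ) : EReal) * g v ≤ g (μ • u + (1 - μ) • v)

/-- `f` is paraconcave: `f - (1/(2λ))‖·‖²` is concave for some `λ > 0`. -/
def Paraconcave (f : H → EReal) : Prop :=
  ∃ lam > (0:ℝ), ConcaveOnE Set.univ
    (fun x => f x - ((1 / (2 * lam) * ‖x‖ ^ 2 : ℝ) : EReal))

/-- The cone generated by `A - x`. -/
def coneGen {E : Type*} [AddCommGroup E] [Module ℝ E] (A : Set E) (x : E) : Set E :=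
  {y | ∃ t : ℝ, 0 ≤ t ∧ ∃ a ∈ A, y = t • (a - x)}

/-- Quasi-relative interior. -/
def qri {E : Type*} [NormedAddCommGroup E] [NormedSpace ℝ E] (A : Set E) : Set E :=
  {x ∈ A | ∃ S : Submodule ℝ E, closure (coneGen A x) = (S : Set E)}

/-- Strong quasi-relative interior. -/
def sqri {E : Type*} [NormedAddCommGroup E] [NormedSpace ℝ E] (A : Set E) : Set E :=
  {x ∈ A | ∃ S : Submodule ℝ E, IsClosed (S : Set E) ∧ coneGen A x = (S : Set E)}

/-- Second-order optimality condition of the first kind at `x₀`. -/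
def SOC1 (f : H → EReal) (x₀ : H) : Prop :=
  ∃ β > (0:ℝ), ∀ h : H, ‖h‖ = 1 → ((β : ℝ) : EReal) ≤ secondDini f x₀ 0 h

/-- Second-order optimality condition of the second kind at `x₀`. -/
def SOC2 (f : H → EReal) (x₀ : H) : Prop :=
  ∃ β > (0:ℝ), ∀ h : H, ‖h‖ = 1 → (D2M f x₀ 0 h).Nonempty →
    ∃ z ∈ D2M f x₀ 0 h, β ≤ (inner ℝ z h : ℝ)

/-- Second-order optimality condition of the third kind at `x₀`. -/
def SOC3 (f : H → EReal) (x₀ : H) : Prop :=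
  ∃ β > (0:ℝ), ∀ h : H, ‖h‖ = 1 → ∀ z ∈ partial2M f x₀ 0 h, β ≤ (inner ℝ z h : ℝ)

/-- `x₀` is a strict local minimizer of order two for `f`. -/
def StrictLocalMinOrder2 (f : H → EReal) (x₀ : H) : Prop :=
  ∃ β > (0:ℝ), ∃ δ > (0:ℝ), ∀ x ∈ Metric.ball x₀ δ,
    f x₀ + ((β / 2 * ‖x - x₀‖ ^ 2 : ℝ) : EReal) ≤ f x

/-- `f''₋(x₀,p,h) ≥ β` holds uniformly with respect to `h ∈ A`. -/
def UniformDiniGE (f : H → EReal) (x₀ p : H) (β : ℝ) (A : Set H) : Prop :=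
  ∀ ε > (0:ℝ), ∃ δ > (0:ℝ), ∀ t : ℝ, 0 < t → t < δ →
    ∀ h ∈ A + Metric.closedBall (0:H) δ, ((β - ε : ℝ) : EReal) ≤ Delta2 f x₀ p t h

lemma coneGen_image {E F : Type*} [AddCommGroup E] [Module ℝ E] [AddCommGroup F] [Module ℝ F]
    (T : E →ₗ[ℝ] F) (A : Set E) (x : E) :
    coneGen (T '' A) (T x) = T '' coneGen A x := by
  ext y
  constructor
  · rintro ⟨t, ht, _, ⟨a, ha, rfl⟩, rfl⟩
    exact ⟨t • (a - x), ⟨t, ht, a, ha, rfl⟩, by simp⟩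
  · rintro ⟨_, ⟨t, ht, a, ha, rfl⟩, rfl⟩
    exact ⟨t, ht, T a, ⟨a, ha, rfl⟩, by simp⟩

section QuasiRelativeInterior

variable {E F : Type*} [NormedAddCommGroup E] [NormedSpace ℝ E]
  [NormedAddCommGroup F] [NormedSpace ℝ F]

lemma ContinuousLinearMap.map_mem_qri (T : E →L[ℝ] F) {A : Set E} {x : E} (hx : x ∈ qri A) :
    T x ∈ qri (T '' A) := by
  obtain ⟨hxA, S, hS⟩ := hx
  refine ⟨⟨x, hxA, rfl⟩, (S.map (T : E →ₗ[ℝ] F)).topologicalClosure, ?_⟩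
  rw [Submodule.topologicalClosure_coe, Submodule.map_coe, ContinuousLinearMap.coe_coe, ← hS,
    closure_image_closure T.continuous]
  exact congrArg closure (coneGen_image (T : E →ₗ[ℝ] F) A x)

/-- If `closure (cone (C - x))` is a subspace `S`, then `cone (C - w) ⊆ S` for every
`w ∈ [x, y)`, while `cone (C - x) ⊆ cone (C - w)` because `C - x` is recovered from
`C - w` by rescaling the segment through `y`. -/
lemma Convex.combo_qri_self_mem_qri {C : Set E} (hC : Convex ℝ C) {x y : E} (hx : x ∈ qri C)
    (hy : y ∈ C) {a b : ℝ} (ha : 0 < a) (hb : 0 ≤ b) (hab : a + b = 1) :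
    a • x + b • y ∈ qri C := by
  obtain ⟨hxC, S, hS⟩ := hx
  have sub_mem_S : ∀ c ∈ C, c - x ∈ S := fun c hc => by
    rw [← SetLike.mem_coe, ← hS]
    exact subset_closure ⟨1, zero_le_one, c, hc, (one_smul ℝ _).symm⟩
  refine ⟨hC hxC hy ha.le hb hab, S, subset_antisymm ?_ ?_⟩
  · refine closure_minimal ?_ (hS ▸ isClosed_closure)
    rintro _ ⟨t, -, c, hc, rfl⟩
    have hsplit : c - (a • x + b • y) = (c - x) - b • (y - x) := by
      rw [show a = 1 - b by linarith]; module
    rw [SetLike.mem_coe, hsplit]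
    exact S.smul_mem t (S.sub_mem (sub_mem_S c hc) (S.smul_mem b (sub_mem_S y hy)))
  · rw [← hS]
    refine closure_mono ?_
    rintro _ ⟨t, ht, c, hc, rfl⟩
    refine ⟨t / a, div_nonneg ht ha.le, a • c + b • y, hC hc hy ha.le hb hab, ?_⟩
    rw [show a • c + b • y - (a • x + b • y) = a • (c - x) by module, smul_smul,
      div_mul_cancel₀ _ ha.ne']

end QuasiRelativeInterior

section MixedSecondOrder

variable {E : Type*} [NormedAddCommGroup E] [InnerProductSpace ℝ E]

lemma smul_mem_mixedTangent {f : E → EReal} {x₀ p : E} {q : E × E}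
    (hq : q ∈ mixedTangent f x₀ p) {c : ℝ} (hc : 0 < c) : c • q ∈ mixedTangent f x₀ p := by
  obtain ⟨t, hn, zn, ht_pos, ht, hhn, hzn, hmem⟩ := hq
  refine ⟨fun n => t n / c, fun n => c • hn n, fun n => c • zn n,
    fun n => div_pos (ht_pos n) hc, by simpa using ht.div_const c, hhn.const_smul c,
    fun w => ?_, fun n => ?_⟩
  · simpa [real_inner_smul_left] using (hzn w).const_mul c
  · have hcancel : ∀ y : E, (t n / c) • (c • y) = t n • y := fun y => by
      rw [smul_smul, div_mul_cancel₀ _ hc.ne']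
    simpa only [hcancel] using hmem n

lemma add_smul_mem_partial2M {f : E → EReal} {x₀ p h₁ h₂ z₁ z₂ : E}
    (hz₁ : z₁ ∈ partial2M f x₀ p h₁) (hz₂ : z₂ ∈ partial2M f x₀ p h₂) {a b : ℝ}
    (ha : 0 ≤ a) (hb : 0 ≤ b) : a • z₁ + b • z₂ ∈ partial2M f x₀ p (a • h₁ + b • h₂) := by
  intro w hw
  have h₁w := mul_le_mul_of_nonneg_left (hz₁ w hw) ha
  have h₂w := mul_le_mul_of_nonneg_left (hz₂ w hw) hb
  simp only [inner_add_left, inner_neg_left, real_inner_smul_left] at h₁w h₂w ⊢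
  linarith

lemma convex_setOf_partial2M_nonempty (f : E → EReal) (x₀ p : E) :
    Convex ℝ {h : E | (partial2M f x₀ p h).Nonempty} := by
  rintro h₁ ⟨z₁, hz₁⟩ h₂ ⟨z₂, hz₂⟩ a b ha hb -
  exact ⟨_, add_smul_mem_partial2M hz₁ hz₂ ha hb⟩

lemma setOf_partial2M_nonempty_eq_image (f : E → EReal) (x₀ p : E) :
    {h : E | (partial2M f x₀ p h).Nonempty} = (-ContinuousLinearMap.snd ℝ E E) '' NM f x₀ p := by
  ext h
  constructor
  · rintro ⟨z, hz⟩
    exact ⟨(z, -h), hz, by simp⟩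
  · rintro ⟨q, hq, rfl⟩
    exact ⟨q.1, by simpa [partial2M] using hq⟩

/-- Pairing `(z, -w) ∈ N_M` with `(-w, ‖w‖ ζ) ∈ T_M`, where `ζ ∈ D²_M f(x₀,p)(-w/‖w‖)` is the
element provided by the hypothesis, gives `⟪z, w⟫ ≥ ‖w‖² ⟪ζ, -w/‖w‖⟫ ≥ β ‖w‖²`. -/
lemma mul_sq_norm_le_inner_of_mem_partial2M {f : E → EReal} {x₀ p : E} {β : ℝ}
    (hβ : ∀ u : E, ‖u‖ = 1 → (D2M f x₀ p u).Nonempty → ∃ ζ ∈ D2M f x₀ p u, β ≤ inner ℝ ζ u)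
    {w z : E} (hw : (D2M f x₀ p (-w)).Nonempty) (hz : z ∈ partial2M f x₀ p w) :
    β * ‖w‖ ^ 2 ≤ inner ℝ z w := by
  rcases eq_or_ne w 0 with rfl | hw0
  · simp
  have hr : 0 < ‖w‖ := norm_pos_iff.mpr hw0
  set u : E := ‖w‖⁻¹ • -w with hu_def
  have hu : ‖u‖ = 1 := by
    rw [hu_def, norm_smul, norm_neg, norm_inv, norm_norm, inv_mul_cancel₀ hr.ne']
  have hru : ‖w‖ • u = -w := by rw [hu_def, smul_smul, mul_inv_cancel₀ hr.ne', one_smul]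
  obtain ⟨ζ', hζ'⟩ := hw
  obtain ⟨ζ, hζ, hβζ⟩ := hβ u hu ⟨_, smul_mem_mixedTangent hζ' (inv_pos.mpr hr)⟩
  have hpair : inner ℝ z (‖w‖ • u) + inner ℝ (-w) (‖w‖ • ζ) ≤ 0 :=
    hz _ (smul_mem_mixedTangent hζ hr)
  have hwζ : inner ℝ (-w) ζ = ‖w‖ * inner ℝ ζ u := by
    rw [← hru, real_inner_smul_left, real_inner_comm]
  rw [hru, inner_neg_right, real_inner_smul_right, hwζ] at hpair
  nlinarith [mul_le_mul_of_nonneg_left hβζ (sq_nonneg ‖w‖)]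

end MixedSecondOrder

/-- Every point `(z', w)` of the open segment from `(q₀.1, -q₀.2)` to `(z, h)` in the graph of
`∂²_M f(x₀,0)` has `w ∈ qri (dom ∂²_M f(x₀,0))`, hence `-w ∈ dom D²_M f(x₀,0)`, and SOC2 gives
`β ‖w‖² ≤ ⟪z', w⟫`; this closed inequality passes to the endpoint `(z, h)`. -/
theorem soc2_implies_soc3_general (f : H → EReal) (x₀ : H)
    (hqri : (qri (NM f x₀ 0)).Nonempty)
    (hincl : qri {h : H | (partial2M f x₀ 0 h).Nonempty} ⊆
      -(sqri {h : H | (D2M f x₀ 0 h).Nonempty})) :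
    SOC2 f x₀ → SOC3 f x₀ := by
  rintro ⟨β, hβ, hsoc2⟩
  refine ⟨β, hβ, fun h hh z hz => ?_⟩
  obtain ⟨q₀, hq₀⟩ := hqri
  have hh₀ : -q₀.2 ∈ qri {h : H | (partial2M f x₀ 0 h).Nonempty} := by
    rw [setOf_partial2M_nonempty_eq_image]
    exact (-ContinuousLinearMap.snd ℝ H H).map_mem_qri hq₀
  have hz₀ : q₀.1 ∈ partial2M f x₀ 0 (-q₀.2) := by simpa [partial2M] using hq₀.1
  have hseg : openSegment ℝ (q₀.1, -q₀.2) (z, h) ⊆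
      {q : H × H | β * ‖q.2‖ ^ 2 ≤ inner ℝ q.1 q.2} := by
    rintro _ ⟨a, b, ha, hb, hab, rfl⟩
    have hw := (convex_setOf_partial2M_nonempty f x₀ 0).combo_qri_self_mem_qri hh₀ ⟨z, hz⟩
      ha hb.le hab
    exact mul_sq_norm_le_inner_of_mem_partial2M hsoc2 (hincl hw).1
      (add_smul_mem_partial2M hz₀ hz ha.le hb.le)
  have hclosed : IsClosed {q : H × H | β * ‖q.2‖ ^ 2 ≤ inner ℝ q.1 q.2} :=
    isClosed_le (by fun_prop) (by fun_prop)
  have hend : (z, h) ∈ closure (openSegment ℝ (q₀.1, -q₀.2) (z, h)) := by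
    rw [closure_openSegment]
    exact right_mem_segment ℝ _ _
  simpa [hh] using closure_minimal hseg hclosed hend

theorem soc2_implies_soc3 (f : H → EReal) (hlsc : LowerSemicontinuous f) (hbot : ∀ x, f x ≠ ⊥)
    (hproper : ∃ x, f x ≠ ⊤) (x₀ : H) (hdom : f x₀ ≠ ⊤) (hp0 : (0:H) ∈ proxSubdiff f x₀)
    (hqri : (qri (NM f x₀ 0)).Nonempty)
    (hincl : qri {h : H | (partial2M f x₀ 0 h).Nonempty} ⊆
      -(sqri {h : H | (D2M f x₀ 0 h).Nonempty})) :
    SOC2 f x₀ → SOC3 f x₀ :=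
  soc2_implies_soc3_general f x₀ hqri hincl
end
end

section
/- Let H be a finite-dimensional real Hilbert space, f : H → ℝ ∪ {+∞} a proper lower semicontinuous function and x̄ ∈ dom f. Then the following are equivalent: (i) x̄ is a strict local minimizer of order two for f; (ii) 0 ∈ ∂_p f(x̄) and there exists β > 0 such that f''₋(x̄, 0, h) ≥ β holds uniformly with respect to h in the unit sphere S_H; (iii) 0 ∈ ∂_p f(x̄) and there exists β > 0 such that f''₋(x̄, 0, h) ≥ β for all h ∈ S_H; (iv) 0 ∈ ∂_p f(x̄) and f''₋(x̄, 0, h) > 0 for all h ∈ S_H. -/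
/-! Once `f x₀` is a real number `r`, `c ≤ Δ₂f(x₀,0,t,h)` says exactly `r + c t²/2 ≤ f(x₀ + t h)`,
so quadratic growth with constant `β/2` bounds the difference quotients by `β‖h‖²`, uniformly for
`h` near the unit sphere; this gives (i) ⇒ (ii) ⇒ (iii) ⇒ (iv). Conversely, if `x₀` is not a strict
minimizer of order two, there are `tₙ ↓ 0` and unit vectors `uₙ` with `Δ₂f(x₀,0,tₙ,uₙ) < 1/(n+1)`;
by compactness of the sphere in finite dimension a subsequence of `uₙ` converges to some `h`, and
then `f''₋(x₀,0,h) ≤ 0`. -/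

open Filter Topology Set Pointwise

noncomputable section

variable {H : Type*} [NormedAddCommGroup H] [InnerProductSpace ℝ H] [CompleteSpace H]

theorem abs_norm_sub_le_of_mem_sphere_add_closedBall {F : Type*} [SeminormedAddCommGroup F]
    {h : F} {r δ : ℝ} (hh : h ∈ Metric.sphere (0 : F) r + Metric.closedBall 0 δ) :
    |‖h‖ - r| ≤ δ := by
  obtain ⟨s, hs, b, hb, rfl⟩ := hh
  rw [mem_sphere_zero_iff_norm] at hs
  rw [mem_closedBall_zero_iff] at hb
  simpa [hs] using (abs_norm_sub_norm_le (s + b) s).trans (by simpa using hb)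

section

variable {E : Type*} [NormedAddCommGroup E] [InnerProductSpace ℝ E]

theorem coe_le_Delta2_zero_iff {f : E → EReal} {x₀ h : E} {r t c : ℝ} (hx₀ : f x₀ = r)
    (ht : 0 < t) :
    (c : EReal) ≤ Delta2 f x₀ 0 t h ↔ ((r + c * t ^ 2 / 2 : ℝ) : EReal) ≤ f (x₀ + t • h) := by
  have ht2 : 0 < 2 / t ^ 2 := by positivity
  rw [Delta2, hx₀, inner_zero_left, mul_zero, EReal.coe_zero, sub_zero]
  induction f (x₀ + t • h) using EReal.rec with
  | bot => simp [EReal.coe_mul_bot_of_pos ht2]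
  | top => simp [EReal.coe_mul_top_of_pos ht2]
  | coe a =>
    norm_cast
    rw [← div_le_iff₀' ht2]
    constructor <;> intro hc
    · field_simp at hc; linarith
    · field_simp; linarith

theorem StrictLocalMinOrder2.zero_mem_proxSubdiff {f : E → EReal} {x₀ : E}
    (hmin : StrictLocalMinOrder2 f x₀) : (0 : E) ∈ proxSubdiff f x₀ := by
  obtain ⟨β, hβ, δ, hδ, hmin⟩ := hmin
  refine ⟨β, hβ, δ, hδ, fun y hy => le_trans ?_ (hmin y hy)⟩
  gcongr
  rw [inner_zero_left]
  nlinarith [sq_nonneg ‖y - x₀‖]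

theorem le_Delta2_zero_of_strictMin {f : E → EReal} {x₀ h : E} {r β δ t : ℝ}
    (hx₀ : f x₀ = r)
    (hmin : ∀ x ∈ Metric.ball x₀ δ, f x₀ + ((β / 2 * ‖x - x₀‖ ^ 2 : ℝ) : EReal) ≤ f x)
    (ht : 0 < t) (hth : t * ‖h‖ < δ) :
    ((β * ‖h‖ ^ 2 : ℝ) : EReal) ≤ Delta2 f x₀ 0 t h := by
  have hmem : x₀ + t • h ∈ Metric.ball x₀ δ := by
    rwa [Metric.mem_ball, dist_eq_norm, add_sub_cancel_left, norm_smul, Real.norm_of_nonneg ht.le]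
  rw [coe_le_Delta2_zero_iff hx₀ ht]
  convert hmin _ hmem using 1
  rw [hx₀, add_sub_cancel_left, norm_smul, Real.norm_of_nonneg ht.le]
  norm_cast
  ring

theorem StrictLocalMinOrder2.exists_uniformDiniGE_sphere {f : E → EReal} {x₀ : E} {r : ℝ}
    (hmin : StrictLocalMinOrder2 f x₀) (hx₀ : f x₀ = r) :
    ∃ β > 0, UniformDiniGE f x₀ 0 β (Metric.sphere 0 1) := by
  obtain ⟨β, hβ, δ, hδ, hmin⟩ := hmin
  refine ⟨β, hβ, fun ε hε => ?_⟩
  set δ' := min (δ / 2) (min (ε / (2 * β)) (1 / 2))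
  have hδ'δ : δ' ≤ δ / 2 := min_le_left _ _
  have hδ'ε : 2 * β * δ' ≤ ε := by
    have : δ' ≤ ε / (2 * β) := (min_le_right _ _).trans (min_le_left _ _)
    rwa [le_div_iff₀ (by positivity), mul_comm] at this
  have hδ'1 : δ' ≤ 1 / 2 := (min_le_right _ _).trans (min_le_right _ _)
  refine ⟨δ', lt_min (by positivity) (lt_min (by positivity) one_half_pos), ?_⟩
  intro t ht htδ h hh
  obtain ⟨hlow, hup⟩ := abs_le.1 (abs_norm_sub_le_of_mem_sphere_add_closedBall hh)
  refine le_trans ?_ (le_Delta2_zero_of_strictMin hx₀ hmin ht (by nlinarith))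
  rw [EReal.coe_le_coe_iff]
  have hsq : (1 - δ') ^ 2 ≤ ‖h‖ ^ 2 := pow_le_pow_left₀ (by linarith) (by linarith) 2
  nlinarith [mul_le_mul_of_nonneg_left hsq hβ.le]

theorem UniformDiniGE.le_secondDini {f : E → EReal} {x₀ p h : E} {β : ℝ} {A : Set E}
    (hunif : UniformDiniGE f x₀ p β A) (hA : h ∈ A) : (β : EReal) ≤ secondDini f x₀ p h := by
  refine EReal.ge_of_forall_gt_iff_ge.1 fun z hz => ?_
  obtain ⟨δ, hδ, hD⟩ := hunif (β - z) (by linarith [EReal.coe_lt_coe_iff.1 hz])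
  have hev : ∀ᶠ q : ℝ × E in 𝓝[>] 0 ×ˢ 𝓝 h, (z : EReal) ≤ Delta2 f x₀ p q.1 q.2 := by
    filter_upwards [prod_mem_prod (Ioo_mem_nhdsGT hδ) (Metric.closedBall_mem_nhds h hδ)]
      with q ⟨⟨hq₀, hqδ⟩, hqh⟩
    refine sub_sub_cancel β z ▸ hD q.1 hq₀ hqδ q.2 ⟨h, hA, q.2 - h, ?_, add_sub_cancel _ _⟩
    rwa [mem_closedBall_zero_iff, ← dist_eq_norm]
  exact le_liminf_of_le (by isBoundedDefault) hev

theorem secondDini_le_liminf {f : E → EReal} {x₀ p h : E} {t : ℕ → ℝ} {u : ℕ → E}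
    (ht : Tendsto t atTop (𝓝[>] 0)) (hu : Tendsto u atTop (𝓝 h)) :
    secondDini f x₀ p h ≤ liminf (fun n => Delta2 f x₀ p (t n) (u n)) atTop :=
  (ht.prodMk hu).liminf_le_liminf_comp

theorem exists_Delta2_lt_of_not_strictLocalMinOrder2 {f : E → EReal} {x₀ : E} {r ε : ℝ}
    (hx₀ : f x₀ = r) (hmin : ¬ StrictLocalMinOrder2 f x₀) (hε : 0 < ε) :
    ∃ t ∈ Ioo 0 ε, ∃ u ∈ Metric.sphere (0 : E) 1, Delta2 f x₀ 0 t u < ε := by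
  obtain ⟨x, hx, hlt⟩ :
      ∃ x ∈ Metric.ball x₀ ε, f x < f x₀ + ((ε / 2 * ‖x - x₀‖ ^ 2 : ℝ) : EReal) := by
    by_contra! hge
    exact hmin ⟨ε, hε, ε, hε, hge⟩
  have hne : x - x₀ ≠ 0 := by
    rintro hzero
    rw [sub_eq_zero.1 hzero, hx₀, sub_self, norm_zero] at hlt
    simp at hlt
  set t := ‖x - x₀‖
  have ht : 0 < t := norm_pos_iff.2 hne
  refine ⟨t, ⟨ht, by rwa [Metric.mem_ball, dist_eq_norm] at hx⟩, t⁻¹ • (x - x₀), ?_, ?_⟩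
  · rw [mem_sphere_zero_iff_norm, norm_smul, norm_inv, norm_norm, inv_mul_cancel₀ ht.ne']
  · rw [← not_le, coe_le_Delta2_zero_iff hx₀ ht, smul_inv_smul₀ ht.ne', add_sub_cancel, not_le]
    convert hlt using 1
    rw [hx₀]
    norm_cast
    ring

theorem exists_secondDini_nonpos_of_forall_exists_Delta2_lt {f : E → EReal} {x₀ p : E}
    {K : Set E} (hK : IsCompact K)
    (hsmall : ∀ ε > 0, ∃ t ∈ Ioo 0 ε, ∃ u ∈ K, Delta2 f x₀ p t u < ε) :
    ∃ h ∈ K, secondDini f x₀ p h ≤ 0 := by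
  choose t ht u hu hlt using fun n : ℕ => hsmall (1 / (n + 1)) Nat.one_div_pos_of_nat
  obtain ⟨h, hK, φ, hφ, hlim⟩ := hK.tendsto_subseq hu
  have hinv : Tendsto (fun n : ℕ => 1 / ((φ n : ℝ) + 1)) atTop (𝓝 0) :=
    tendsto_one_div_add_atTop_nhds_zero_nat.comp hφ.tendsto_atTop
  have htφ : Tendsto (t ∘ φ) atTop (𝓝[>] 0) :=
    tendsto_nhdsWithin_iff.2 ⟨squeeze_zero (fun n => (ht (φ n)).1.le) (fun n => (ht (φ n)).2.le)
      hinv, .of_forall fun n => (ht (φ n)).1⟩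
  refine ⟨h, hK, ?_⟩
  calc secondDini f x₀ p h ≤ liminf (fun n => Delta2 f x₀ p (t (φ n)) (u (φ n))) atTop :=
        secondDini_le_liminf htφ hlim
    _ ≤ liminf (fun n => ((1 / ((φ n : ℝ) + 1) : ℝ) : EReal)) atTop :=
        liminf_le_liminf (.of_forall fun n => (hlt (φ n)).le)
    _ = 0 := (EReal.tendsto_coe.2 hinv).liminf_eq

end

theorem strict_local_min_order_two_finiteDim_general [FiniteDimensional ℝ H] (f : H → EReal) (hbot : ∀ x, f x ≠ ⊥)
    (x₀ : H) (hdom : f x₀ ≠ ⊤) :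
    (StrictLocalMinOrder2 f x₀ ↔
      ((0:H) ∈ proxSubdiff f x₀ ∧
        ∃ β > (0:ℝ), UniformDiniGE f x₀ 0 β (Metric.sphere (0:H) 1))) ∧
    (((0:H) ∈ proxSubdiff f x₀ ∧
        ∃ β > (0:ℝ), UniformDiniGE f x₀ 0 β (Metric.sphere (0:H) 1)) ↔
      ((0:H) ∈ proxSubdiff f x₀ ∧
        ∃ β > (0:ℝ), ∀ h : H, ‖h‖ = 1 → ((β : ℝ) : EReal) ≤ secondDini f x₀ 0 h)) ∧
    (((0:H) ∈ proxSubdiff f x₀ ∧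
        ∃ β > (0:ℝ), ∀ h : H, ‖h‖ = 1 → ((β : ℝ) : EReal) ≤ secondDini f x₀ 0 h) ↔
      ((0:H) ∈ proxSubdiff f x₀ ∧ ∀ h : H, ‖h‖ = 1 → 0 < secondDini f x₀ 0 h)) := by
  obtain ⟨r, hr⟩ : ∃ r : ℝ, f x₀ = r := ⟨(f x₀).toReal, (EReal.coe_toReal hdom (hbot x₀)).symm⟩
  have i_ii (hmin : StrictLocalMinOrder2 f x₀) :
      (0 : H) ∈ proxSubdiff f x₀ ∧ ∃ β > (0:ℝ), UniformDiniGE f x₀ 0 β (Metric.sphere 0 1) :=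
    ⟨hmin.zero_mem_proxSubdiff, hmin.exists_uniformDiniGE_sphere hr⟩
  have ii_iii : (∃ β > (0:ℝ), UniformDiniGE f x₀ 0 β (Metric.sphere 0 1)) →
      ∃ β > (0:ℝ), ∀ h : H, ‖h‖ = 1 → (β : EReal) ≤ secondDini f x₀ 0 h :=
    fun ⟨β, hβ, hunif⟩ => ⟨β, hβ, fun h hh => hunif.le_secondDini (mem_sphere_zero_iff_norm.2 hh)⟩
  have iii_iv : (∃ β > (0:ℝ), ∀ h : H, ‖h‖ = 1 → (β : EReal) ≤ secondDini f x₀ 0 h) →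
      ∀ h : H, ‖h‖ = 1 → 0 < secondDini f x₀ 0 h :=
    fun ⟨β, hβ, hle⟩ h hh => (EReal.coe_pos.2 hβ).trans_le (hle h hh)
  have iv_i (hpos : ∀ h : H, ‖h‖ = 1 → 0 < secondDini f x₀ 0 h) : StrictLocalMinOrder2 f x₀ := by
    by_contra hmin
    obtain ⟨h, hh, hle⟩ := exists_secondDini_nonpos_of_forall_exists_Delta2_lt
      (isCompact_sphere 0 1) fun ε hε => exists_Delta2_lt_of_not_strictLocalMinOrder2 hr hmin hε
    exact (hpos h (mem_sphere_zero_iff_norm.1 hh)).not_ge hle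
  exact ⟨⟨i_ii, fun h => iv_i (iii_iv (ii_iii h.2))⟩,
    ⟨fun h => ⟨h.1, ii_iii h.2⟩, fun h => i_ii (iv_i (iii_iv h.2))⟩,
    ⟨fun h => ⟨h.1, iii_iv h.2⟩, fun h => ⟨h.1, ii_iii (i_ii (iv_i h.2)).2⟩⟩⟩

theorem strict_local_min_order_two_finiteDim [FiniteDimensional ℝ H] (f : H → EReal) (hlsc : LowerSemicontinuous f) (hbot : ∀ x, f x ≠ ⊥)
    (hproper : ∃ x, f x ≠ ⊤) (x₀ : H) (hdom : f x₀ ≠ ⊤) :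
    (StrictLocalMinOrder2 f x₀ ↔
      ((0:H) ∈ proxSubdiff f x₀ ∧
        ∃ β > (0:ℝ), UniformDiniGE f x₀ 0 β (Metric.sphere (0:H) 1))) ∧
    (((0:H) ∈ proxSubdiff f x₀ ∧
        ∃ β > (0:ℝ), UniformDiniGE f x₀ 0 β (Metric.sphere (0:H) 1)) ↔
      ((0:H) ∈ proxSubdiff f x₀ ∧
        ∃ β > (0:ℝ), ∀ h : H, ‖h‖ = 1 → ((β : ℝ) : EReal) ≤ secondDini f x₀ 0 h)) ∧
    (((0:H) ∈ proxSubdiff f x₀ ∧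
        ∃ β > (0:ℝ), ∀ h : H, ‖h‖ = 1 → ((β : ℝ) : EReal) ≤ secondDini f x₀ 0 h) ↔
      ((0:H) ∈ proxSubdiff f x₀ ∧ ∀ h : H, ‖h‖ = 1 → 0 < secondDini f x₀ 0 h)) :=
  strict_local_min_order_two_finiteDim_general f hbot x₀ hdom
end
end
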